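/- Let σ be an m-simplex in ℝⁿ with barycenter κ, diameter D (longest edge length) and shortest edge length s. Then for every point x of σ, ‖x − κ‖ ≤ (m/(m+1))·(D² − ((m−1)/(2m))·s²)^{1/2}. -/

import Mathlib

/-!
Writing `v i - κ = (m + 1)⁻¹ • ∑ j ≠ i, (v i - v j)` and expanding the squared norm of the sum
into inner products, each of the `m` diagonal terms is at most `D²` and each of the `m (m - 1)`
off-diagonal terms `⟪v i - v j, v i - v k⟫ = (‖v i - v j‖² + ‖v i - v k‖² - ‖v j - v k‖²) / 2` is
at most `D² - s² / 2`. This bounds the distance from every vertex to `κ`, and the distance to `κ`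
is a convex function, so on the convex hull it is maximised at a vertex.
-/

open Finset RealInnerProductSpace

section

variable {E : Type*} [NormedAddCommGroup E] [InnerProductSpace ℝ E]

lemma real_inner_le_of_norm_le_of_le_norm_sub {a b : E} {D s : ℝ} (ha : ‖a‖ ≤ D) (hb : ‖b‖ ≤ D)
    (hs : 0 ≤ s) (hab : s ≤ ‖a - b‖) : ⟪a, b⟫ ≤ D ^ 2 - s ^ 2 / 2 := by
  rw [real_inner_eq_norm_mul_self_add_norm_mul_self_sub_norm_sub_mul_self_div_two]
  nlinarith [norm_nonneg a, norm_nonneg b]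

lemma norm_sum_sq_le_of_norm_le_of_le_norm_sub {ι : Type*} [DecidableEq ι] (J : Finset ι)
    (w : ι → E) {D s : ℝ} (hD : ∀ j ∈ J, ‖w j‖ ≤ D) (hs : 0 ≤ s)
    (hsep : ∀ j ∈ J, ∀ k ∈ J, j ≠ k → s ≤ ‖w j - w k‖) :
    ‖∑ j ∈ J, w j‖ ^ 2 ≤ (#J : ℝ) ^ 2 * D ^ 2 - (#J * (#J - 1) / 2 : ℝ) * s ^ 2 := by
  have hpair : ∀ j ∈ J, ∀ k ∈ J,
      ⟪w j, w k⟫ ≤ D ^ 2 - s ^ 2 / 2 + if k = j then s ^ 2 / 2 else 0 := by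
    intro j hj k hk
    by_cases hkj : k = j
    · subst hkj
      rw [real_inner_self_eq_norm_sq, if_pos rfl]
      nlinarith [norm_nonneg (w k), hD k hk]
    · rw [if_neg hkj, add_zero]
      exact real_inner_le_of_norm_le_of_le_norm_sub (hD j hj) (hD k hk) hs
        (hsep j hj k hk (Ne.symm hkj))
  have hrow : ∀ j ∈ J, ∑ k ∈ J, (D ^ 2 - s ^ 2 / 2 + if k = j then s ^ 2 / 2 else 0)
      = #J * (D ^ 2 - s ^ 2 / 2) + s ^ 2 / 2 := by
    intro j hj
    rw [sum_add_distrib, sum_const, sum_ite_eq' J j, if_pos hj, nsmul_eq_mul]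
  calc ‖∑ j ∈ J, w j‖ ^ 2 = ∑ j ∈ J, ∑ k ∈ J, ⟪w j, w k⟫ := by
        simp_rw [← real_inner_self_eq_norm_sq, sum_inner, inner_sum]
    _ ≤ ∑ j ∈ J, ∑ k ∈ J, (D ^ 2 - s ^ 2 / 2 + if k = j then s ^ 2 / 2 else 0) :=
        sum_le_sum fun j hj => sum_le_sum (hpair j hj)
    _ = (#J : ℝ) ^ 2 * D ^ 2 - (#J * (#J - 1) / 2 : ℝ) * s ^ 2 := by
        rw [sum_congr rfl hrow, sum_const, nsmul_eq_mul]
        ring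

lemma sub_smul_sum_eq_smul_sum_sub {m : ℕ} (v : Fin (m + 1) → E) (i : Fin (m + 1)) :
    v i - ((m : ℝ) + 1)⁻¹ • ∑ j, v j = ((m : ℝ) + 1)⁻¹ • ∑ j ∈ univ.erase i, (v i - v j) := by
  have hm : ((m : ℝ) + 1) ≠ 0 := by positivity
  rw [sum_erase univ (f := fun j => v i - v j) (sub_self (v i)), sum_sub_distrib, sum_const,
    card_univ, Fintype.card_fin, smul_sub, ← Nat.cast_smul_eq_nsmul ℝ, smul_smul, Nat.cast_add_one,
    inv_mul_cancel₀ hm, one_smul]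

lemma norm_vertex_sub_barycenter_le {m : ℕ} (v : Fin (m + 1) → E) {D s : ℝ} (hs : 0 ≤ s)
    (hD : ∀ p q, p ≠ q → ‖v p - v q‖ ≤ D) (hsep : ∀ p q, p ≠ q → s ≤ ‖v p - v q‖)
    (i : Fin (m + 1)) :
    ‖v i - ((m : ℝ) + 1)⁻¹ • ∑ j, v j‖ ≤
      ((m : ℝ) + 1)⁻¹ * √((m : ℝ) ^ 2 * D ^ 2 - (m * (m - 1) / 2 : ℝ) * s ^ 2) := by
  have hcard : (#(univ.erase i) : ℝ) = m := by simp
  have hsum := norm_sum_sq_le_of_norm_le_of_le_norm_sub (univ.erase i) (fun j => v i - v j)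
    (D := D) (fun j hj => hD i j (ne_of_mem_erase hj).symm) hs fun j _ k _ hjk => by
      simpa only [sub_sub_sub_cancel_left] using hsep k j (Ne.symm hjk)
  rw [hcard] at hsum
  rw [sub_smul_sum_eq_smul_sum_sub, norm_smul, Real.norm_of_nonneg (by positivity)]
  gcongr
  exact Real.le_sqrt_of_sq_le hsum

end

/-- Bound on the distance from any point of a simplex to its barycenter in terms of
the diameter D (longest edge) and the shortest edge length s. -/
theorem simplex_barycenter_point_bound (n m : ℕ) (hm : 0 < m) (D s : ℝ)
    (v : Fin (m + 1) → EuclideanSpace ℝ (Fin n))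
    (hne : (Finset.univ.offDiag : Finset (Fin (m + 1) × Fin (m + 1))).Nonempty)
    (hD : D = Finset.univ.offDiag.sup' hne fun pq => ‖v pq.1 - v pq.2‖)
    (hs : s = Finset.univ.offDiag.inf' hne fun pq => ‖v pq.1 - v pq.2‖)
    (κ : EuclideanSpace ℝ (Fin n)) (hκ : κ = ((m : ℝ) + 1)⁻¹ • ∑ j, v j) :
    ∀ x ∈ convexHull ℝ (Set.range v),
      ‖x - κ‖ ≤ ((m : ℝ) / ((m : ℝ) + 1)) *
        Real.sqrt (D ^ 2 - (((m : ℝ) - 1) / (2 * (m : ℝ))) * s ^ 2) := by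
  subst hκ
  intro x hx
  obtain ⟨_, ⟨i, rfl⟩, hxi⟩ := convexHull_exists_dist_ge hx _
  have hmem : ∀ p q, p ≠ q → (p, q) ∈ (univ.offDiag : Finset (Fin (m + 1) × Fin (m + 1))) :=
    fun p q hpq => mem_offDiag.2 ⟨mem_univ p, mem_univ q, hpq⟩
  have hD_le : ∀ p q, p ≠ q → ‖v p - v q‖ ≤ D := fun p q hpq => by
    rw [hD]
    exact le_sup' (fun pq : Fin (m + 1) × Fin (m + 1) => ‖v pq.1 - v pq.2‖) (hmem p q hpq)
  have hs_le : ∀ p q, p ≠ q → s ≤ ‖v p - v q‖ := fun p q hpq => by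
    rw [hs]
    exact inf'_le (fun pq : Fin (m + 1) × Fin (m + 1) => ‖v pq.1 - v pq.2‖) (hmem p q hpq)
  have hs0 : 0 ≤ s := by
    rw [hs]; exact le_inf' hne _ fun _ _ => norm_nonneg _
  have hm0 : (m : ℝ) ≠ 0 := by positivity
  have hrad : (m : ℝ) ^ 2 * D ^ 2 - (m * (m - 1) / 2 : ℝ) * s ^ 2
      = (m : ℝ) ^ 2 * (D ^ 2 - ((m - 1) / (2 * m) : ℝ) * s ^ 2) := by
    field_simp
  calc ‖x - _‖ ≤ ‖v i - ((m : ℝ) + 1)⁻¹ • ∑ j, v j‖ := by simpa only [dist_eq_norm] using hxi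
    _ ≤ ((m : ℝ) + 1)⁻¹ * √((m : ℝ) ^ 2 * D ^ 2 - (m * (m - 1) / 2 : ℝ) * s ^ 2) :=
        norm_vertex_sub_barycenter_le v hs0 hD_le hs_le i
    _ = _ := by
        rw [hrad, Real.sqrt_mul (by positivity), Real.sqrt_sq (by positivity)]
        ring
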